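/- The Wasserstein distance between densities obtained via the inverse log quantile density transformation satisfies d_W(ψ_Q^{-1}(X), ψ_Q^{-1}(Y)) ≤ 2 e^{4‖X‖_∞} e^{2 d_∞(X,Y)} d₂(X,Y) for continuous X, Y on [0,1]. -/

import Mathlib

/-!
Put `f = exp ∘ X`, `g = exp ∘ Y`, `θ_f = ∫₀¹ f`, `θ_g = ∫₀¹ g`, so that the quantile functions are
`F t = θ_f⁻¹ ∫₀ᵗ f` and `G t = θ_g⁻¹ ∫₀ᵗ g`. The identity
`F t - G t = θ_f⁻¹ (∫₀ᵗ f - ∫₀ᵗ g) + θ_f⁻¹ (θ_g - θ_f) G t` together with `0 ≤ G t ≤ 1` gives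
`|F t - G t| ≤ 2 θ_f⁻¹ ‖f - g‖₁` for every `t`. Here `θ_f⁻¹ ≤ e^{‖X‖_∞}`, and since `X` and `Y` are
both bounded by `‖X‖_∞ + d_∞(X, Y)`, on which range `exp` is `e^{‖X‖_∞ + d_∞(X, Y)}`-Lipschitz,
`‖f - g‖₁ ≤ e^{‖X‖_∞ + d_∞(X, Y)} ‖X - Y‖₁ ≤ e^{‖X‖_∞ + d_∞(X, Y)} ‖X - Y‖₂`. Finally the `L²` norm
of `F - G` on `[0, 1]` is at most its sup norm.
-/

open MeasureTheory ProbabilityTheory Set Real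

theorem IsCompact.le_ciSup_of_continuousOn {α : Type*} [TopologicalSpace α] {K : Set α}
    {f : α → ℝ} (hK : IsCompact K) (hf : ContinuousOn f K) {x : α} (hx : x ∈ K) :
    f x ≤ ⨆ u : K, f u :=
  le_ciSup (f := fun u : K => f u) (by rw [← image_eq_range]; exact hK.bddAbove_image hf)
    ⟨x, hx⟩

theorem Real.abs_exp_sub_exp_le {a b c : ℝ} (ha : a ≤ c) (hb : b ≤ c) :
    |exp a - exp b| ≤ exp c * |a - b| := by
  wlog hba : b ≤ a generalizing a b
  · rw [abs_sub_comm, abs_sub_comm a]; exact this hb ha (le_of_not_ge hba)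
  rw [abs_of_nonneg (sub_nonneg.2 (exp_le_exp.2 hba)), abs_of_nonneg (sub_nonneg.2 hba)]
  have hsplit : exp b = exp a * exp (b - a) := by rw [← exp_add, add_sub_cancel]
  calc exp a - exp b = exp a * (1 - exp (b - a)) := by rw [hsplit]; ring
    _ ≤ exp a * (a - b) :=
        mul_le_mul_of_nonneg_left (by linarith [Real.add_one_le_exp (b - a)]) (exp_pos a).le
    _ ≤ exp c * (a - b) := by gcongr

theorem integral_abs_exp_sub_exp_le {X Y : ℝ → ℝ} {a b c : ℝ} (hab : a ≤ b)
    (hX : ContinuousOn X (Icc a b)) (hY : ContinuousOn Y (Icc a b))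
    (hXc : ∀ s ∈ Icc a b, X s ≤ c) (hYc : ∀ s ∈ Icc a b, Y s ≤ c) :
    ∫ s in a..b, |exp (X s) - exp (Y s)| ≤ exp c * ∫ s in a..b, |X s - Y s| := by
  rw [← intervalIntegral.integral_const_mul]
  refine intervalIntegral.integral_mono_on hab ?_ ?_
    fun s hs => Real.abs_exp_sub_exp_le (hXc s hs) (hYc s hs)
  · exact ContinuousOn.intervalIntegrable_of_Icc hab (by fun_prop)
  · exact ContinuousOn.intervalIntegrable_of_Icc hab (by fun_prop)

theorem inv_integral_exp_le_exp {X : ℝ → ℝ} {M : ℝ} (hX : ContinuousOn X (Icc 0 1))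
    (hM : ∀ s ∈ Icc (0:ℝ) 1, -M ≤ X s) : (∫ s in (0:ℝ)..1, exp (X s))⁻¹ ≤ exp M := by
  have hθ : exp (-M) ≤ ∫ s in (0:ℝ)..1, exp (X s) := by
    simpa using intervalIntegral.integral_mono_on zero_le_one
      (intervalIntegrable_const (μ := volume))
      (ContinuousOn.intervalIntegrable_of_Icc zero_le_one (by fun_prop))
      fun s hs => exp_le_exp.2 (hM s hs)
  simpa only [exp_neg, inv_inv] using inv_anti₀ (exp_pos _) hθ

theorem sq_integral_le_integral_sq {Ω : Type*} [MeasurableSpace Ω] {μ : Measure Ω}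
    [IsProbabilityMeasure μ] {f : Ω → ℝ} (hf : MemLp f 2 μ) :
    (∫ ω, f ω ∂μ) ^ 2 ≤ ∫ ω, f ω ^ 2 ∂μ := by
  have := variance_nonneg f μ
  rw [variance_eq_sub hf] at this
  simpa [sub_nonneg] using this

theorem intervalIntegral_abs_le_sqrt_intervalIntegral_sq {g : ℝ → ℝ}
    (hg : ContinuousOn g (Icc 0 1)) :
    ∫ s in (0:ℝ)..1, |g s| ≤ √(∫ s in (0:ℝ)..1, g s ^ 2) := by
  have : IsProbabilityMeasure (volume.restrict (Icc (0:ℝ) 1)) := ⟨by simp⟩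
  have hL2 : MemLp (fun s => |g s|) 2 (volume.restrict (Icc 0 1)) := by
    refine (memLp_two_iff_integrable_sq (hg.abs.aestronglyMeasurable measurableSet_Icc)).2 ?_
    simp only [sq_abs]
    exact (hg.pow 2).integrableOn_compact isCompact_Icc
  simp only [intervalIntegral.integral_of_le zero_le_one, ← integral_Icc_eq_integral_Ioc]
  refine Real.le_sqrt_of_sq_le ?_
  simpa only [sq_abs] using sq_integral_le_integral_sq hL2

theorem sqrt_intervalIntegral_sq_le {h : ℝ → ℝ} {a b C : ℝ} (hab : a ≤ b)
    (hC : ∀ t ∈ Icc a b, |h t| ≤ C) : √(∫ t in a..b, h t ^ 2) ≤ √(b - a) * C := by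
  have hC₀ : 0 ≤ C := (abs_nonneg _).trans (hC a ⟨le_rfl, hab⟩)
  rw [← Real.sqrt_sq hC₀, ← Real.sqrt_mul (sub_nonneg.2 hab)]
  refine Real.sqrt_le_sqrt ?_
  rw [intervalIntegral.integral_of_le hab]
  calc ∫ t in Ioc a b, h t ^ 2 ≤ ∫ t in Ioc a b, C ^ 2 := by
        refine integral_mono_of_nonneg (ae_of_all _ fun _ => sq_nonneg _)
          (integrableOn_const (by simp)) ((ae_restrict_iff' measurableSet_Ioc).2 ?_)
        exact ae_of_all _ fun t ht => by
          simpa only [sq_abs] using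
            pow_le_pow_left₀ (abs_nonneg _) (hC t (Ioc_subset_Icc_self ht)) 2
    _ = (b - a) * C ^ 2 := by simp [hab]

theorem abs_inv_mul_sub_inv_mul_le {θ θ' A B E : ℝ} (hθ : 0 < θ) (hB : 0 ≤ B) (hBθ' : B ≤ θ')
    (hAB : |A - B| ≤ E) (hθθ' : |θ - θ'| ≤ E) :
    |θ⁻¹ * A - θ'⁻¹ * B| ≤ 2 * θ⁻¹ * E := by
  set r := θ'⁻¹ * B
  have hr₀ : 0 ≤ r := mul_nonneg (inv_nonneg.2 (hB.trans hBθ')) hB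
  have hr₁ : r ≤ 1 := inv_mul_le_one_of_le₀ hBθ' (hB.trans hBθ')
  -- also for `θ' = 0`, where `θ'⁻¹ = 0` but `B = 0` is forced
  have hBr : B = θ' * r := by
    rcases (hB.trans hBθ').eq_or_lt with h | h
    · rw [← h] at hBθ' ⊢; simp [le_antisymm hBθ' hB]
    · exact (mul_inv_cancel_left₀ h.ne' B).symm
  have hθi : 0 ≤ θ⁻¹ := inv_nonneg.2 hθ.le
  calc |θ⁻¹ * A - r| = |θ⁻¹ * (A - B) + θ⁻¹ * r * (θ' - θ)| := by
        rw [hBr]; congr 1; linear_combination r * inv_mul_cancel₀ hθ.ne'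
    _ ≤ θ⁻¹ * |A - B| + θ⁻¹ * r * |θ - θ'| := by
        refine (abs_add_le _ _).trans_eq ?_
        rw [abs_mul θ⁻¹, abs_mul (θ⁻¹ * r), abs_sub_comm θ', abs_of_nonneg hθi,
          abs_of_nonneg (mul_nonneg hθi hr₀)]
    _ ≤ θ⁻¹ * E + θ⁻¹ * 1 * E := by gcongr
    _ = 2 * θ⁻¹ * E := by ring

theorem abs_inv_integral_mul_integral_sub_le {f g : ℝ → ℝ} {a b t : ℝ} (ht : t ∈ Icc a b)
    (hf : IntervalIntegrable f volume a b) (hg : IntervalIntegrable g volume a b)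
    (hg₀ : ∀ s ∈ Icc a b, 0 ≤ g s) (hθf : 0 < ∫ s in a..b, f s) :
    |(∫ s in a..b, f s)⁻¹ * (∫ s in a..t, f s) - (∫ s in a..b, g s)⁻¹ * ∫ s in a..t, g s| ≤
      2 * (∫ s in a..b, f s)⁻¹ * ∫ s in a..b, |f s - g s| := by
  have hab : a ≤ b := ht.1.trans ht.2
  have hdiff : ∀ u ∈ Icc a b,
      |(∫ s in a..u, f s) - ∫ s in a..u, g s| ≤ ∫ s in a..b, |f s - g s| := fun u hu => by
    have hsub : uIcc a u ⊆ uIcc a b :=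
      uIcc_subset_uIcc left_mem_uIcc (by rwa [uIcc_of_le hab])
    rw [← intervalIntegral.integral_sub (hf.mono_set hsub) (hg.mono_set hsub)]
    exact (intervalIntegral.abs_integral_le_integral_abs hu.1).trans <|
      intervalIntegral.integral_mono_interval le_rfl hu.1 hu.2
        (ae_of_all _ fun _ => abs_nonneg _) (hf.sub hg).abs
  refine abs_inv_mul_sub_inv_mul_le hθf ?_ ?_ (hdiff t ht) (hdiff b ⟨hab, le_rfl⟩)
  · exact intervalIntegral.integral_nonneg ht.1 fun s hs => hg₀ s ⟨hs.1, hs.2.trans ht.2⟩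
  · refine intervalIntegral.integral_mono_interval le_rfl ht.1 ht.2 ?_ hg
    exact (ae_restrict_iff' measurableSet_Ioc).2
      (ae_of_all _ fun s hs => hg₀ s (Ioc_subset_Icc_self hs))

theorem abs_inv_integral_exp_mul_integral_exp_sub_le {X Y : ℝ → ℝ} {M c t : ℝ}
    (hX : ContinuousOn X (Icc 0 1)) (hY : ContinuousOn Y (Icc 0 1))
    (hXM : ∀ s ∈ Icc (0:ℝ) 1, -M ≤ X s) (hXc : ∀ s ∈ Icc (0:ℝ) 1, X s ≤ c)
    (hYc : ∀ s ∈ Icc (0:ℝ) 1, Y s ≤ c) (ht : t ∈ Icc (0:ℝ) 1) :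
    |(∫ s in (0:ℝ)..1, exp (X s))⁻¹ * (∫ s in (0:ℝ)..t, exp (X s)) -
        (∫ s in (0:ℝ)..1, exp (Y s))⁻¹ * (∫ s in (0:ℝ)..t, exp (Y s))| ≤
      2 * exp M * (exp c * √(∫ s in (0:ℝ)..1, (X s - Y s) ^ 2)) := by
  have hexpX : IntervalIntegrable (fun s => exp (X s)) volume 0 1 :=
    ContinuousOn.intervalIntegrable_of_Icc zero_le_one (by fun_prop)
  have hexpY : IntervalIntegrable (fun s => exp (Y s)) volume 0 1 :=
    ContinuousOn.intervalIntegrable_of_Icc zero_le_one (by fun_prop)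
  have hθX : 0 < ∫ s in (0:ℝ)..1, exp (X s) :=
    intervalIntegral.intervalIntegral_pos_of_pos_on hexpX (fun s _ => exp_pos _) zero_lt_one
  calc _ ≤ 2 * (∫ s in (0:ℝ)..1, exp (X s))⁻¹ * ∫ s in (0:ℝ)..1, |exp (X s) - exp (Y s)| :=
        abs_inv_integral_mul_integral_sub_le ht hexpX hexpY (fun s _ => (exp_pos _).le) hθX
    _ ≤ 2 * exp M * (exp c * ∫ s in (0:ℝ)..1, |X s - Y s|) := by
        gcongr
        · exact intervalIntegral.integral_nonneg zero_le_one fun _ _ => abs_nonneg _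
        · exact inv_integral_exp_le_exp hX hXM
        · exact integral_abs_exp_sub_exp_le zero_le_one hX hY hXc hYc
    _ ≤ 2 * exp M * (exp c * √(∫ s in (0:ℝ)..1, (X s - Y s) ^ 2)) := by
        gcongr
        exact intervalIntegral_abs_le_sqrt_intervalIntegral_sq (hX.sub hY)

/-- Wasserstein bound for the inverse log quantile density transformation:
`d_W(ψ_Q⁻¹(X), ψ_Q⁻¹(Y)) ≤ 2 e^{4‖X‖_∞} e^{2 d_∞(X,Y)} d₂(X,Y)`, where the Wasserstein
distance is the L² distance between the corresponding quantile functions. -/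
theorem wasserstein_inverse_lqd_bound
    (X Y : ℝ → ℝ)
    (hX : ContinuousOn X (Set.Icc 0 1)) (hY : ContinuousOn Y (Set.Icc 0 1)) :
    (∫ t in (0:ℝ)..1,
        ((∫ s in (0:ℝ)..1, Real.exp (X s))⁻¹ * (∫ s in (0:ℝ)..t, Real.exp (X s)) -
          (∫ s in (0:ℝ)..1, Real.exp (Y s))⁻¹ * (∫ s in (0:ℝ)..t, Real.exp (Y s))) ^ 2) ^
        ((1:ℝ)/2) ≤
      2 * Real.exp (4 * ⨆ u : Set.Icc (0:ℝ) 1, |X u.1|) *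
        Real.exp (2 * ⨆ u : Set.Icc (0:ℝ) 1, |X u.1 - Y u.1|) *
        (∫ s in (0:ℝ)..1, (X s - Y s) ^ 2) ^ ((1:ℝ)/2) := by
  set M := ⨆ u : Set.Icc (0:ℝ) 1, |X u.1|
  set D := ⨆ u : Set.Icc (0:ℝ) 1, |X u.1 - Y u.1|
  have hM : ∀ s ∈ Icc (0:ℝ) 1, |X s| ≤ M := fun _ hs =>
    isCompact_Icc.le_ciSup_of_continuousOn hX.abs hs
  have hD : ∀ s ∈ Icc (0:ℝ) 1, |X s - Y s| ≤ D := fun _ hs =>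
    isCompact_Icc.le_ciSup_of_continuousOn (hX.sub hY).abs hs
  have hM₀ : 0 ≤ M := (abs_nonneg _).trans (hM 0 (left_mem_Icc.2 zero_le_one))
  have hD₀ : 0 ≤ D := (abs_nonneg _).trans (hD 0 (left_mem_Icc.2 zero_le_one))
  have hXle : ∀ s ∈ Icc (0:ℝ) 1, X s ≤ M + D := fun s hs => by
    linarith [le_abs_self (X s), hM s hs]
  have hYle : ∀ s ∈ Icc (0:ℝ) 1, Y s ≤ M + D := fun s hs => by
    linarith [le_abs_self (X s), neg_abs_le (X s - Y s), hM s hs, hD s hs]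
  set J := √(∫ s in (0:ℝ)..1, (X s - Y s) ^ 2)
  rw [← sqrt_eq_rpow, ← sqrt_eq_rpow]
  calc _ ≤ 2 * exp M * (exp (M + D) * J) := by
        simpa using sqrt_intervalIntegral_sq_le zero_le_one fun t ht =>
          abs_inv_integral_exp_mul_integral_exp_sub_le hX hY
            (fun s hs => neg_le_of_abs_le (hM s hs)) hXle hYle ht
    _ = 2 * exp (M + (M + D)) * J := by rw [exp_add M (M + D)]; ring
    _ ≤ 2 * exp (4 * M + 2 * D) * J := by gcongr 2 * exp ?_ * J; linarith
    _ = 2 * exp (4 * M) * exp (2 * D) * J := by rw [exp_add (4 * M)]; ring
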